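/- Let G be a single unicast index coding problem on [N] and suppose S_1,...,S_P ⊆ [N] form a Q-fold acyclic induced subgraph (AIS) cover of G. Then for every ℓ ≥ minrk_q(G) there exists a valid vector linear index code for G over F_q with message length M = P, broadcast rate ℓ, and locality at most (Q + (P−Q)ℓ)/P; consequently β*_{G,q}( (Q + (P−Q)ℓ)/P ) ≤ ℓ. -/

import Mathlib

/-- A valid vector linear index code for the problem with side information sets `K`:
messages are indexed by pairs `(i, m) : Fin N × Fin M`. -/
def ValidVectorLinearCode {N M ℓ : ℕ} (q : Type) [Field q]
    (K : Fin N → Finset (Fin N))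
    (L : Matrix (Fin N × Fin M) (Fin ℓ) q)
    (R : Fin N → Finset (Fin ℓ)) : Prop :=
  ∀ i : Fin N, ∀ m : Fin M,
    ∃ u : Fin N × Fin M → q,
      (∀ p : Fin N × Fin M, u p ≠ 0 → p.1 ∈ K i) ∧
      u + Pi.single (i, m) 1 ∈
        Submodule.span q ((fun k (p : Fin N × Fin M) => L p k) '' (R i : Set (Fin ℓ)))

/-- The minrank of the side information graph over `F_q`. -/
noncomputable def minrk (q : Type) [Field q] {N : ℕ} (K : Fin N → Finset (Fin N)) : ℕ :=
  sInf {n : ℕ | ∃ A : Matrix (Fin N) (Fin N) q,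
    (∀ i, A i i = 1) ∧ (∀ i j, j ≠ i → j ∉ K i → A j i = 0) ∧ A.rank = n}

/-- The directed graph given by `K` has a directed cycle of length `n` inside `S`. -/
def HasCycleIn {N : ℕ} (K : Fin N → Finset (Fin N)) (S : Finset (Fin N)) (n : ℕ) : Prop :=
  ∃ c : ZMod n → Fin N, (∀ t, c t ∈ S) ∧ Function.Injective c ∧ ∀ t, c (t + 1) ∈ K (c t)

/-! Take a matrix `A` fitting `G` with rank `minrk_q(G) ≤ ℓ`. On an acyclic set `S_p` the columns
of `A` are linearly independent: a vanishing combination would give every vertex of its support an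
in-neighbour inside the support, hence a cycle. So they extend to `ℓ` vectors spanning the column
space. Encode the `p`-th symbol of all messages with these `ℓ` vectors. Column `i` of `A` is `1`
at `i` and supported on `K_i` elsewhere, so it is a decoding vector for receiver `i`: in block `p`
it is one transmitted symbol if `i ∈ S_p`, and a combination of all `ℓ` symbols otherwise. As `i`
lies in at least `Q` of the `S_p`, receiver `i` reads at most `Q + (P - Q) ℓ` symbols. -/

namespace Function

variable {α : Type*} {f : α → α} {x : α}

theorem exists_mem_periodicPts [Finite α] [Nonempty α] (f : α → α) :
    ∃ x, x ∈ periodicPts f := by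
  obtain ⟨z⟩ := ‹Nonempty α›
  obtain ⟨a, b, hab, heq⟩ := Finite.exists_ne_map_eq_of_infinite (fun k : ℕ => f^[k] z)
  wlog hlt : a < b generalizing a b
  · exact this b a hab.symm heq.symm (by omega)
  refine ⟨f^[a] z, mk_mem_periodicPts (n := b - a) (by omega) ?_⟩
  rw [IsPeriodicPt, IsFixedPt, ← iterate_add_apply, Nat.sub_add_cancel hlt.le]
  exact heq.symm

variable [NeZero (minimalPeriod f x)]

theorem injective_iterate_zmodVal :
    Injective fun t : ZMod (minimalPeriod f x) => f^[t.val] x :=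
  fun s t hst => ZMod.val_injective _ (iterate_injOn_Iio_minimalPeriod s.val_lt t.val_lt hst)

theorem iterate_zmodVal_add_one (t : ZMod (minimalPeriod f x)) :
    f^[(t + 1).val] x = f (f^[t.val] x) := by
  have hval : (t + 1).val = (t.val + 1) % minimalPeriod f x := by
    rw [← ZMod.val_natCast, Nat.cast_add, ZMod.natCast_zmod_val, Nat.cast_one]
  rw [hval, iterate_mod_minimalPeriod_eq, iterate_succ_apply']

end Function

section Graph

variable {N : ℕ} {K : Fin N → Finset (Fin N)}

theorem HasCycleIn.mono {S T : Finset (Fin N)} {n : ℕ} (h : HasCycleIn K S n) (hST : S ⊆ T) :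
    HasCycleIn K T n :=
  let ⟨c, hcS, hinj, hstep⟩ := h
  ⟨c, fun t => hST (hcS t), hinj, hstep⟩

theorem exists_hasCycleIn_of_forall_exists_mem {T : Finset (Fin N)} (hT : T.Nonempty)
    (h : ∀ j ∈ T, ∃ i ∈ T, j ∈ K i) : ∃ n, 0 < n ∧ HasCycleIn K T n := by
  choose pred hpredT hpred using h
  let F : T → T := fun j => ⟨pred j j.2, hpredT j j.2⟩
  have : Nonempty T := hT.coe_sort
  obtain ⟨y, hy⟩ := Function.exists_mem_periodicPts F
  have hn := Function.minimalPeriod_pos_of_mem_periodicPts hy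
  have : NeZero (Function.minimalPeriod F y) := ⟨hn.ne'⟩
  -- `F` steps against the edges, so the cycle is the periodic orbit of `y` read backwards.
  refine ⟨_, hn, fun t => F^[(-t).val] y, fun t => (F^[(-t).val] y).2,
    Subtype.val_injective.comp (Function.injective_iterate_zmodVal.comp neg_injective),
    fun t => ?_⟩
  have hstep := Function.iterate_zmodVal_add_one (f := F) (x := y) (-(t + 1))
  rw [show -(t + 1) + 1 = -t by ring] at hstep
  simp only [hstep]
  exact hpred _ _

end Graph

def Fits {q : Type*} [Zero q] [One q] {N : ℕ} (K : Fin N → Finset (Fin N))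
    (A : Matrix (Fin N) (Fin N) q) : Prop :=
  (∀ i, A i i = 1) ∧ ∀ i j, j ≠ i → j ∉ K i → A j i = 0

namespace Fits

variable {q : Type*} {N : ℕ} {K : Fin N → Finset (Fin N)}

theorem one [Zero q] [One q] : Fits K (1 : Matrix (Fin N) (Fin N) q) :=
  ⟨Matrix.one_apply_eq, fun _ _ hji _ => Matrix.one_apply_ne hji⟩

theorem mem_of_apply_ne_zero [Zero q] [One q] {A : Matrix (Fin N) (Fin N) q} (hA : Fits K A)
    {i j : Fin N} (hji : j ≠ i) (hA0 : A j i ≠ 0) : j ∈ K i := by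
  by_contra hj
  exact hA0 (hA.2 i j hji hj)

theorem linearIndepOn_col [Field q] {A : Matrix (Fin N) (Fin N) q} (hA : Fits K A)
    {T : Finset (Fin N)} (hT : ∀ n, 0 < n → ¬ HasCycleIn K T n) :
    LinearIndepOn q A.col T := by
  classical
  rw [linearIndepOn_finset_iff]
  intro g hg
  by_contra! hne
  set T' := T.filter fun i => g i ≠ 0
  have hpred : ∀ j ∈ T', ∃ i ∈ T', j ∈ K i := by
    intro j hj
    rw [Finset.mem_filter] at hj
    by_contra! hnone
    have hrow : ∑ i ∈ T, g i * A j i = g j := by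
      rw [← Finset.sum_erase_add _ _ hj.1, hA.1 j, mul_one, add_eq_right]
      refine Finset.sum_eq_zero fun i hi => ?_
      obtain ⟨hij, hiT⟩ := Finset.mem_erase.1 hi
      by_cases hgi : g i = 0
      · rw [hgi, zero_mul]
      · have : j ∉ K i := hnone i (Finset.mem_filter.2 ⟨hiT, hgi⟩)
        rw [hA.2 i j (Ne.symm hij) this, mul_zero]
    have := congrFun hg j
    simp only [Finset.sum_apply, Pi.smul_apply, Matrix.col_apply, smul_eq_mul,
      Pi.zero_apply] at this
    exact hj.2 (hrow ▸ this)
  obtain ⟨i, hiT, hgi⟩ := hne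
  obtain ⟨n, hn, hcyc⟩ :=
    exists_hasCycleIn_of_forall_exists_mem ⟨i, Finset.mem_filter.2 ⟨hiT, hgi⟩⟩ hpred
  exact hT n hn (hcyc.mono (Finset.filter_subset _ _))

end Fits

theorem exists_fits_rank_eq_minrk (q : Type) [Field q] {N : ℕ} (K : Fin N → Finset (Fin N)) :
    ∃ A : Matrix (Fin N) (Fin N) q, Fits K A ∧ A.rank = minrk q K := by
  obtain ⟨A, hA1, hA0, hrank⟩ :=
    Nat.sInf_mem (s := {n : ℕ | ∃ A : Matrix (Fin N) (Fin N) q,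
      (∀ i, A i i = 1) ∧ (∀ i j, j ≠ i → j ∉ K i → A j i = 0) ∧ A.rank = n})
      ⟨_, 1, (Fits.one (K := K)).1, Fits.one.2, rfl⟩
  exact ⟨A, ⟨hA1, hA0⟩, hrank⟩

section LocalSpanning

variable {F V ι : Type*} [DivisionRing F] [AddCommGroup V] [Module F V] [Finite ι]
  {v : ι → V} {s : Set ι} {ℓ : ℕ}

theorem exists_fin_extension_of_linearIndepOn (hs : LinearIndepOn F v s)
    (hℓ : Module.finrank F (Submodule.span F (Set.range v)) ≤ ℓ) :
    ∃ (β : Fin ℓ → V) (σ : s → Fin ℓ), (∀ i, β (σ i) = v i) ∧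
      ∀ i, v i ∈ Submodule.span F (Set.range β) := by
  classical
  obtain ⟨b, -, hsb, hspan, hb⟩ := exists_linearIndepOn_extension hs (Set.subset_univ s)
  have : Fintype b := Fintype.ofFinite b
  have hcard : Fintype.card b ≤ Fintype.card (Fin ℓ) := by
    rw [Fintype.card_fin, ← finrank_span_eq_card hb]
    have := Module.Finite.span_of_finite F (Set.finite_range v)
    refine le_trans (Submodule.finrank_mono (Submodule.span_mono ?_)) hℓ
    rintro _ ⟨i, rfl⟩
    exact Set.mem_range_self _
  obtain ⟨e⟩ := Function.Embedding.nonempty_of_card_le hcard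
  refine ⟨Function.extend e (fun i => v i) 0, fun i => e ⟨i, hsb i.2⟩,
    fun i => e.injective.extend_apply _ _ _, fun i => ?_⟩
  refine Submodule.span_mono ?_ (hspan ⟨i, Set.mem_univ i, rfl⟩)
  rintro _ ⟨j, hj, rfl⟩
  exact ⟨e ⟨j, hj⟩, e.injective.extend_apply _ _ _⟩

theorem exists_localSpanning_of_linearIndepOn (hs : LinearIndepOn F v s)
    (hℓ : Module.finrank F (Submodule.span F (Set.range v)) ≤ ℓ) :
    ∃ (β : Fin ℓ → V) (R : ι → Finset (Fin ℓ)),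
      (∀ i, v i ∈ Submodule.span F (β '' R i)) ∧ ∀ i ∈ s, (R i).card ≤ 1 := by
  classical
  obtain ⟨β, σ, hβσ, hspan⟩ := exists_fin_extension_of_linearIndepOn hs hℓ
  refine ⟨β, fun i => if h : i ∈ s then {σ ⟨i, h⟩} else Finset.univ, fun i => ?_, fun i hi => ?_⟩
  · by_cases h : i ∈ s
    · simp only [dif_pos h, Finset.coe_singleton, Set.image_singleton, hβσ ⟨i, h⟩]
      exact Submodule.mem_span_singleton_self _
    · simpa only [dif_neg h, Finset.coe_univ, Set.image_univ] using hspan i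
  · simp only [dif_pos hi, Finset.card_singleton, le_refl]

end LocalSpanning

section BlockCode

variable (q : Type*) [Semiring q]

def blockEmbed {ι κ : Type*} [DecidableEq κ] (m : κ) : (ι → q) →ₗ[q] (ι × κ → q) where
  toFun w x := if x.2 = m then w x.1 else 0
  map_add' w w' := by ext x; by_cases h : x.2 = m <;> simp [h]
  map_smul' c w := by ext x; by_cases h : x.2 = m <;> simp [h]

variable {q} {N P ℓ : ℕ}

def blockCode (β : Fin P → Fin ℓ → Fin N → q) : Matrix (Fin N × Fin P) (Fin (P * ℓ)) q :=
  fun x k => blockEmbed q (finProdFinEquiv.symm k).1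
    (β (finProdFinEquiv.symm k).1 (finProdFinEquiv.symm k).2) x

def blockQueries (R : Fin P → Fin N → Finset (Fin ℓ)) (i : Fin N) : Finset (Fin (P * ℓ)) :=
  ((Finset.univ.sigma fun p => R p i).map (Equiv.sigmaEquivProd _ _).toEmbedding).map
    finProdFinEquiv.toEmbedding

theorem blockCode_col (β : Fin P → Fin ℓ → Fin N → q) (p : Fin P) (t : Fin ℓ) :
    (blockCode β).col (finProdFinEquiv (p, t)) = blockEmbed q p (β p t) := by
  ext x
  simp [blockCode, Matrix.col_apply]

theorem mem_blockQueries {R : Fin P → Fin N → Finset (Fin ℓ)} {i : Fin N} {p : Fin P}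
    {t : Fin ℓ} : finProdFinEquiv (p, t) ∈ blockQueries R i ↔ t ∈ R p i := by
  simp [blockQueries]

theorem card_blockQueries (R : Fin P → Fin N → Finset (Fin ℓ)) (i : Fin N) :
    (blockQueries R i).card = ∑ p, (R p i).card := by
  simp [blockQueries]

theorem Fits.validVectorLinearCode_blockCode {q : Type} [Field q] {K : Fin N → Finset (Fin N)}
    {A : Matrix (Fin N) (Fin N) q} (hA : Fits K A) (β : Fin P → Fin ℓ → Fin N → q)
    (R : Fin P → Fin N → Finset (Fin ℓ))
    (hR : ∀ p i, A.col i ∈ Submodule.span q (β p '' R p i)) :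
    ValidVectorLinearCode q K (blockCode β) (blockQueries R) := by
  intro i m
  refine ⟨blockEmbed q m (A.col i) - Pi.single (i, m) 1, fun x hx => ?_, ?_⟩
  · by_cases hxe : x = (i, m)
    · subst hxe
      simp [blockEmbed, hA.1] at hx
    · rw [Pi.sub_apply, Pi.single_eq_of_ne hxe, sub_zero] at hx
      simp only [blockEmbed, LinearMap.coe_mk, AddHom.coe_mk, ite_ne_right_iff] at hx
      exact hA.mem_of_apply_ne_zero (fun hxi => hxe (Prod.ext hxi hx.1)) hx.2
  · rw [sub_add_cancel]
    have hmap := Submodule.mem_map_of_mem (f := blockEmbed q m) (hR m i)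
    rw [Submodule.map_span, ← Set.image_comp] at hmap
    refine Submodule.span_mono ?_ hmap
    rintro _ ⟨t, ht, rfl⟩
    exact ⟨finProdFinEquiv (m, t), mem_blockQueries.2 ht, blockCode_col β m t⟩

end BlockCode

theorem Finset.sum_le_add_card_sub_mul {ι : Type*} [Fintype ι] {c : ι → ℕ} {F : Finset ι}
    {Q ℓ : ℕ} (hQ : Q ≤ F.card) (hF : ∀ p ∈ F, c p ≤ 1) (hc : ∀ p, c p ≤ ℓ) :
    ∑ p, c p ≤ Q + (Fintype.card ι - Q) * ℓ := by
  classical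
  obtain ⟨F', hF'F, hF'⟩ := Finset.exists_subset_card_eq hQ
  rw [← Finset.sum_add_sum_compl F']
  gcongr
  · simpa [hF'] using Finset.sum_le_card_nsmul F' c 1 fun p hp => hF p (hF'F hp)
  · simpa [Finset.card_compl, hF'] using Finset.sum_le_card_nsmul F'ᶜ c ℓ fun p _ => hc p

theorem sInf_broadcastRate_le {q : Type} [Field q] {N P ℓ : ℕ} {K : Fin N → Finset (Fin N)}
    {L : Matrix (Fin N × Fin P) (Fin (P * ℓ)) q} {R : Fin N → Finset (Fin (P * ℓ))} {r : ℝ}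
    (hP : 0 < P) (hL : ValidVectorLinearCode q K L R) (hR : ∀ i, ((R i).card : ℝ) / P ≤ r) :
    sInf {β : ℝ | ∃ (M ℓ' : ℕ) (L : Matrix (Fin N × Fin M) (Fin ℓ') q)
        (R : Fin N → Finset (Fin ℓ')),
        0 < M ∧ ValidVectorLinearCode q K L R ∧ (∀ i, ((R i).card : ℝ) / M ≤ r) ∧
        β = (ℓ' : ℝ) / M} ≤ ℓ := by
  refine csInf_le ⟨0, ?_⟩ ⟨P, P * ℓ, L, R, hP, hL, hR, ?_⟩
  · rintro _ ⟨M, ℓ', -, -, -, -, -, rfl⟩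
    positivity
  · rw [Nat.cast_mul, mul_div_cancel_left₀ _ (Nat.cast_ne_zero.2 hP.ne')]

theorem ais_cover_achievability_general
    {N P Q : ℕ} (q : Type) [Field q]
    (K : Fin N → Finset (Fin N))
    (S : Fin P → Finset (Fin N))
    (hP : 0 < P)
    (hQfold : ∀ i : Fin N, Q ≤ (Finset.univ.filter fun p => i ∈ S p).card)
    (hacyclic : ∀ p : Fin P, ∀ n, 0 < n → ¬ HasCycleIn K (S p) n)
    (ℓ : ℕ) (hℓ : minrk q K ≤ ℓ) :
    (∃ (L : Matrix (Fin N × Fin P) (Fin (P * ℓ)) q) (R : Fin N → Finset (Fin (P * ℓ))),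
        ValidVectorLinearCode q K L R ∧ ∀ i, (R i).card ≤ Q + (P - Q) * ℓ) ∧
    sInf {β : ℝ | ∃ (M ℓ' : ℕ) (L : Matrix (Fin N × Fin M) (Fin ℓ') q)
        (R : Fin N → Finset (Fin ℓ')),
        0 < M ∧ ValidVectorLinearCode q K L R ∧
        (∀ i, ((R i).card : ℝ) / M ≤ ((Q + (P - Q) * ℓ : ℕ) : ℝ) / P) ∧
        β = (ℓ' : ℝ) / M}
      ≤ ℓ := by
  obtain ⟨A, hA, hrank⟩ := exists_fits_rank_eq_minrk q K
  have hcols : Module.finrank q (Submodule.span q (Set.range A.col)) ≤ ℓ := by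
    rw [← Matrix.rank_eq_finrank_span_cols, hrank]
    exact hℓ
  choose β R hspan hlocal using fun p =>
    exists_localSpanning_of_linearIndepOn (hA.linearIndepOn_col (hacyclic p)) hcols
  have hcode := hA.validVectorLinearCode_blockCode β R hspan
  have hcard : ∀ i, (blockQueries R i).card ≤ Q + (P - Q) * ℓ := fun i => by
    have := Finset.sum_le_add_card_sub_mul (hQfold i)
      (fun p hp => hlocal p i (Finset.mem_filter.1 hp).2) (fun p => Finset.card_le_univ _)
    rwa [Fintype.card_fin, Fintype.card_fin, ← card_blockQueries] at this
  refine ⟨⟨_, _, hcode, hcard⟩, sInf_broadcastRate_le hP hcode fun i => ?_⟩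
  gcongr
  exact_mod_cast hcard i

/-- If `S_1,…,S_P` form a `Q`-fold acyclic induced subgraph cover of `G`,
then for every `ℓ ≥ minrk_q(G)` there is a valid vector linear index code for `G` over `F_q`
with message length `M = P`, broadcast rate `ℓ` (codelength `P·ℓ`), and locality at most
`(Q + (P−Q)ℓ)/P`; consequently `β*_{G,q}((Q + (P−Q)ℓ)/P) ≤ ℓ`. -/
theorem ais_cover_achievability
    {N P Q : ℕ} (q : Type) [Field q] [Fintype q]
    (K : Fin N → Finset (Fin N)) (hK : ∀ i, i ∉ K i)
    (S : Fin P → Finset (Fin N))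
    (hP : 0 < P)
    (hcover : ∀ i : Fin N, ∃ p, i ∈ S p)
    (hQfold : ∀ i : Fin N, Q ≤ (Finset.univ.filter fun p => i ∈ S p).card)
    (hacyclic : ∀ p : Fin P, ∀ n, 0 < n → ¬ HasCycleIn K (S p) n)
    (ℓ : ℕ) (hℓ : minrk q K ≤ ℓ) :
    (∃ (L : Matrix (Fin N × Fin P) (Fin (P * ℓ)) q) (R : Fin N → Finset (Fin (P * ℓ))),
        ValidVectorLinearCode q K L R ∧ ∀ i, (R i).card ≤ Q + (P - Q) * ℓ) ∧
    sInf {β : ℝ | ∃ (M ℓ' : ℕ) (L : Matrix (Fin N × Fin M) (Fin ℓ') q)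
        (R : Fin N → Finset (Fin ℓ')),
        0 < M ∧ ValidVectorLinearCode q K L R ∧
        (∀ i, ((R i).card : ℝ) / M ≤ ((Q + (P - Q) * ℓ : ℕ) : ℝ) / P) ∧
        β = (ℓ' : ℝ) / M}
      ≤ ℓ :=
  ais_cover_achievability_general q K S hP hQfold hacyclic ℓ hℓ
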